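/- For each fixed k ≥ 1, the ratio (RTCN(n,k)/RTCN(n,k−1)) · (TCN_asym(n,k−1)/TCN_asym(n,k)) converges to 1/4 as n → ∞, where RTCN(n,k) = [n−1, n−1−k] · n!(n−1)!/2^{n−1} and TCN_asym(n,k) = (2n²)^k/k! · (2n−2)!/((n−1)! 2^{n−1}). -/

import Mathlib

open Filter

/-- The unsigned Stirling numbers of the first kind. -/
def stirling1 : ℕ → ℕ → ℕ
  | 0, 0 => 1
  | 0, _ + 1 => 0
  | _ + 1, 0 => 0
  | m + 1, j + 1 => stirling1 m j + m * stirling1 m (j + 1)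

lemma stirling1_of_lt : ∀ m j, m < j → stirling1 m j = 0
  | 0, _ + 1, _ => rfl
  | m + 1, j + 1, h => by
      have h1 := stirling1_of_lt m j (by omega)
      have h2 := stirling1_of_lt m (j + 1) (by omega)
      show stirling1 m j + m * stirling1 m (j+1) = 0
      simp [h1, h2]

lemma stirling1_self : ∀ m, stirling1 m m = 1
  | 0 => rfl
  | m + 1 => by
      show stirling1 m m + m * stirling1 m (m+1) = 1
      simp [stirling1_self m, stirling1_of_lt m (m+1) (by omega)]

lemma pow_lb (a b : ℕ) : ∀ k, a ^ (k+1) + (k+1) * b * a ^ k ≤ (a + b) ^ (k+1)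
  | 0 => by simp [pow_succ]
  | k + 1 => by
      have IH := pow_lb a b k
      have h1 : (a + b) ^ (k+2) = (a+b) * (a+b)^(k+1) := by ring
      have h2 : (a+b) * (a ^ (k+1) + (k+1) * b * a ^ k) ≤ (a+b) * (a+b)^(k+1) :=
        Nat.mul_le_mul_left _ IH
      have h3 : (a+b) * (a ^ (k+1) + (k+1) * b * a ^ k)
          = a^(k+2) + (k+2)*b*a^(k+1) + (k+1)*(b*b)*a^k := by ring
      calc a^(k+2) + (k+2)*b*a^(k+1) ≤ (a+b) * (a ^ (k+1) + (k+1) * b * a ^ k) := by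
              rw [h3]; omega
        _ ≤ (a+b)^(k+2) := by rw [h1]; exact h2

lemma pow_ub (a b m : ℕ) (ha : a ≤ m * m) (hb : b ≤ m) (hm : 1 ≤ m) :
    ∀ k, (a + b) ^ (k+1) ≤ a ^ (k+1) + (k+1) * b * a ^ k + 4 ^ (k+1) * m ^ (2*k)
  | 0 => by simp [pow_succ]
  | k + 1 => by
      have IH := pow_ub a b m ha hb hm k
      have hak : a ^ k ≤ m ^ (2*k) := by
        calc a ^ k ≤ (m*m) ^ k := Nat.pow_le_pow_left ha k
          _ = m ^ (2*k) := by rw [two_mul, pow_add, mul_pow]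
      have hX : (a+b)^(k+2) ≤ (a+b) * (a^(k+1) + (k+1)*b*a^k + 4^(k+1)*m^(2*k)) := by
        calc (a+b)^(k+2) = (a+b) * (a+b)^(k+1) := by ring
          _ ≤ _ := Nat.mul_le_mul_left _ IH
      have hE : (a+b) * (a^(k+1) + (k+1)*b*a^k + 4^(k+1)*m^(2*k))
          = a^(k+2) + (k+2)*b*a^(k+1)
            + ((k+1)*(b*b)*a^k + 4^(k+1)*(a*m^(2*k)) + 4^(k+1)*(b*m^(2*k))) := by ring
      have b1 : (k+1)*(b*b)*a^k ≤ (k+1) * m^(2*k+2) := by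
        calc (k+1)*(b*b)*a^k ≤ (k+1)*(m*m)*m^(2*k) := by
              exact Nat.mul_le_mul (Nat.mul_le_mul_left _ (Nat.mul_le_mul hb hb)) hak
          _ = (k+1) * m^(2*k+2) := by ring
      have b2 : a * m^(2*k) ≤ m^(2*k+2) := by
        calc a * m^(2*k) ≤ (m*m) * m^(2*k) := Nat.mul_le_mul_right _ ha
          _ = m^(2*k+2) := by ring
      have b3 : b * m^(2*k) ≤ m^(2*k+2) := by
        have : b ≤ m * m := le_trans hb (Nat.le_mul_of_pos_left m hm)
        calc b * m^(2*k) ≤ (m*m) * m^(2*k) := Nat.mul_le_mul_right _ this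
          _ = m^(2*k+2) := by ring
      have hk4 : (k + 1) ≤ 4^(k+1) := le_of_lt (Nat.lt_pow_self (by norm_num : 1 < 4))
      have hsum : (k+1)*(b*b)*a^k + 4^(k+1)*(a*m^(2*k)) + 4^(k+1)*(b*m^(2*k))
          ≤ 4^(k+2) * m^(2*(k+1)) := by
        have h4 : (4:ℕ)^(k+2) = 4^(k+1) + 4^(k+1) + 4^(k+1) + 4^(k+1) := by ring
        have e1 : 4^(k+1)*(a*m^(2*k)) ≤ 4^(k+1) * m^(2*k+2) := Nat.mul_le_mul_left _ b2
        have e2 : 4^(k+1)*(b*m^(2*k)) ≤ 4^(k+1) * m^(2*k+2) := Nat.mul_le_mul_left _ b3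
        have e3 : (k+1)*(b*b)*a^k ≤ 4^(k+1) * m^(2*k+2) :=
          le_trans b1 (Nat.mul_le_mul_right _ hk4)
        have : 2*(k+1) = 2*k+2 := by ring
        rw [this]
        calc (k+1)*(b*b)*a^k + 4^(k+1)*(a*m^(2*k)) + 4^(k+1)*(b*m^(2*k))
            ≤ 4^(k+1)*m^(2*k+2) + 4^(k+1)*m^(2*k+2) + 4^(k+1)*m^(2*k+2) :=
              add_le_add (add_le_add e3 e1) e2
          _ = 3 * (4^(k+1)*m^(2*k+2)) := by ring
          _ ≤ 4 * (4^(k+1)*m^(2*k+2)) := Nat.mul_le_mul_right _ (by norm_num)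
          _ = 4^(k+2) * m^(2*k+2) := by ring
      calc (a+b)^(k+2) ≤ _ := hX
        _ = _ := hE
        _ ≤ a^(k+2) + (k+2)*b*a^(k+1) + 4^(k+2) * m^(2*(k+1)) := by omega

def Cc : ℕ → ℕ
  | 0 => 0
  | k + 1 => (k+1) * Cc k + 4 ^ (k+1)

lemma choose2_succ (m : ℕ) : (m+1).choose 2 = m.choose 2 + m := by
  rw [Nat.choose_succ_succ, Nat.choose_one_right, Nat.add_comm]

lemma choose2_le_sq (m : ℕ) : m.choose 2 ≤ m * m := by
  rw [Nat.choose_two_right]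
  calc m * (m-1) / 2 ≤ m * (m-1) := Nat.div_le_self _ _
    _ ≤ m * m := Nat.mul_le_mul_left _ (Nat.sub_le _ _)

lemma stirling_ub : ∀ m k, k ≤ m → k.factorial * stirling1 m (m - k) ≤ m.choose 2 ^ k := by
  intro m
  induction m with
  | zero => intro k hk; interval_cases k; simp [stirling1]
  | succ m IH =>
    intro k hk
    match k, hk with
    | 0, _ => simp [stirling1_self]
    | (j+1), hk =>
      rcases Nat.lt_or_ge j m with hj | hj
      · have h1 : m + 1 - (j+1) = (m - (j+1)) + 1 := by omega
        have h2 : (m - (j+1)) + 1 = m - j := by omega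
        have hrec : stirling1 (m+1) ((m-(j+1))+1)
            = stirling1 m (m-(j+1)) + m * stirling1 m ((m-(j+1))+1) := rfl
        rw [h1, hrec, h2, choose2_succ]
        have ih1 := IH (j+1) (by omega)
        have ih2 := IH j (by omega)
        calc (j+1).factorial * (stirling1 m (m-(j+1)) + m * stirling1 m (m-j))
            = (j+1).factorial * stirling1 m (m-(j+1))
              + (j+1) * m * (j.factorial * stirling1 m (m-j)) := by
              rw [Nat.factorial_succ]; ring
          _ ≤ (m.choose 2)^(j+1) + (j+1) * m * (m.choose 2)^j :=
              add_le_add ih1 (Nat.mul_le_mul_left _ ih2)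
          _ ≤ (m.choose 2 + m)^(j+1) := pow_lb _ _ _
      · have hjm : j = m := by omega
        subst hjm
        have : j + 1 - (j + 1) = 0 := by omega
        rw [this]
        show (j+1).factorial * 0 ≤ _
        simp

lemma stirling_lb : ∀ m k, k ≤ m →
    m.choose 2 ^ k ≤ k.factorial * stirling1 m (m - k) + Cc k * m ^ (2*k-1) := by
  intro m
  induction m with
  | zero => intro k hk; interval_cases k; simp [stirling1]
  | succ m IH =>
    intro k hk
    match k, hk with
    | 0, _ => simp [stirling1_self]
    | (j+1), hk =>
      rcases Nat.lt_or_ge j m with hj | hj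
      · have hm1 : 1 ≤ m := by omega
        have h1 : m + 1 - (j+1) = (m - (j+1)) + 1 := by omega
        have h2 : (m - (j+1)) + 1 = m - j := by omega
        have hrec : stirling1 (m+1) ((m-(j+1))+1)
            = stirling1 m (m-(j+1)) + m * stirling1 m ((m-(j+1))+1) := rfl
        rw [h1, hrec, h2, choose2_succ]
        have ih1 := IH (j+1) (by omega)
        have ih2 := IH j (by omega)
        have hub := pow_ub (m.choose 2) m m (choose2_le_sq m) le_rfl hm1 j
        have step2 : (j+1) * m * (m.choose 2)^j
            ≤ (j+1).factorial * (m * stirling1 m (m - j)) + (j+1) * Cc j * m^(2*j) := by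
          have : (j+1) * m * (m.choose 2)^j
              ≤ (j+1) * m * (j.factorial * stirling1 m (m-j) + Cc j * m^(2*j-1)) :=
            Nat.mul_le_mul_left _ ih2
          refine le_trans this ?_
          have hmm : (j+1) * m * (Cc j * m^(2*j-1)) ≤ (j+1) * Cc j * m^(2*j) := by
            cases j with
            | zero => simp [Cc]
            | succ i =>
              have : 2*(i+1)-1 = 2*i+1 := by omega
              rw [this]
              have : 2*(i+1) = (2*i+1)+1 := by omega
              rw [this]
              calc (i+1+1) * m * (Cc (i+1) * m^(2*i+1))
                  = (i+1+1) * Cc (i+1) * m^((2*i+1)+1) := by ring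
                _ ≤ _ := le_rfl
          calc (j+1) * m * (j.factorial * stirling1 m (m-j) + Cc j * m^(2*j-1))
              = (j+1) * m * (j.factorial * stirling1 m (m-j))
                + (j+1) * m * (Cc j * m^(2*j-1)) := by ring
            _ ≤ (j+1).factorial * (m * stirling1 m (m - j)) + (j+1) * Cc j * m^(2*j) := by
                refine add_le_add (le_of_eq ?_) hmm
                rw [Nat.factorial_succ]; ring
        have hpow : m^(2*j+1) + m^(2*j) ≤ (m+1)^(2*j+1) := by
          have := pow_lb m 1 (2*j)
          calc m^(2*j+1) + m^(2*j) ≤ m^(2*j+1) + (2*j+1) * 1 * m^(2*j) := by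
                refine Nat.add_le_add_left ?_ _
                calc m^(2*j) = 1 * m^(2*j) := (one_mul _).symm
                  _ ≤ (2*j+1) * 1 * m^(2*j) := by
                      refine Nat.mul_le_mul_right _ ?_; omega
            _ ≤ (m+1)^(2*j+1) := this
        have hCc : Cc (j+1) = (j+1) * Cc j + 4^(j+1) := rfl
        have hexp : 2*(j+1)-1 = 2*j+1 := by omega
        rw [hexp]
        calc (m.choose 2 + m)^(j+1)
            ≤ (m.choose 2)^(j+1) + (j+1) * m * (m.choose 2)^j + 4^(j+1) * m^(2*j) := hub
          _ ≤ ((j+1).factorial * stirling1 m (m-(j+1)) + Cc (j+1) * m^(2*(j+1)-1))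
              + ((j+1).factorial * (m * stirling1 m (m - j)) + (j+1) * Cc j * m^(2*j))
              + 4^(j+1) * m^(2*j) := by
              exact add_le_add (add_le_add ih1 step2) le_rfl
          _ = (j+1).factorial * (stirling1 m (m-(j+1)) + m * stirling1 m (m - j))
              + (Cc (j+1) * m^(2*j+1) + ((j+1) * Cc j + 4^(j+1)) * m^(2*j)) := by
              rw [hexp]; ring
          _ = (j+1).factorial * (stirling1 m (m-(j+1)) + m * stirling1 m (m - j))
              + Cc (j+1) * (m^(2*j+1) + m^(2*j)) := by rw [← hCc]; ring
          _ ≤ (j+1).factorial * (stirling1 m (m-(j+1)) + m * stirling1 m (m - j))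
              + Cc (j+1) * (m+1)^(2*j+1) := by
              exact Nat.add_le_add_left (Nat.mul_le_mul_left _ hpow) _
      · have hjm : j = m := by omega
        subst hjm
        have h0 : j + 1 - (j + 1) = 0 := by omega
        rw [h0]
        show (j+1).choose 2 ^ (j+1) ≤ (j+1).factorial * 0 + Cc (j+1) * (j+1)^(2*(j+1)-1)
        have h1 : (j+1).choose 2 ≤ (j+1)*(j+1) := choose2_le_sq (j+1)
        have h2 : j+1 ≤ Cc (j+1) := by
          have : j+1 ≤ 4^(j+1) := le_of_lt (Nat.lt_pow_self (by norm_num : 1 < 4))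
          calc j+1 ≤ 4^(j+1) := this
            _ ≤ (j+1) * Cc j + 4^(j+1) := Nat.le_add_left _ _
        have hexp : 2*(j+1)-1 = 2*j+1 := by omega
        rw [hexp]
        calc (j+1).choose 2 ^ (j+1) ≤ ((j+1)*(j+1))^(j+1) := Nat.pow_le_pow_left h1 _
          _ = (j+1)^(2*j+2) := by
              rw [← pow_two, ← pow_mul, show 2*(j+1) = 2*j+2 from by ring]
          _ = (j+1) * (j+1)^(2*j+1) := by rw [pow_succ]; ring
          _ ≤ Cc (j+1) * (j+1)^(2*j+1) := Nat.mul_le_mul_right _ h2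
          _ ≤ (j+1).factorial * 0 + Cc (j+1) * (j+1)^(2*j+1) := Nat.le_add_left _ _

lemma choose2_cast (m : ℕ) (hm : 1 ≤ m) : (m.choose 2 : ℝ) = (m:ℝ) * ((m:ℝ) - 1) / 2 := by
  have h2 : (m.choose 2) * 2 = m * (m - 1) := by
    rw [Nat.choose_two_right]
    refine Nat.div_mul_cancel ?_
    rcases Nat.even_mul_succ_self (m-1) with ⟨c, hc⟩
    have : m - 1 + 1 = m := by omega
    rw [this] at hc
    exact ⟨c, by rw [mul_comm, hc]; ring⟩
  have := congrArg (fun x : ℕ => (x : ℝ)) h2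
  push_cast [Nat.cast_sub hm] at this
  linarith

lemma choose2_tendsto : Tendsto (fun m : ℕ => (m.choose 2 : ℝ) / (m:ℝ)^2) atTop (nhds (1/2)) := by
  have h : ∀ᶠ m : ℕ in atTop, (1 - (m:ℝ)⁻¹)/2 = (m.choose 2 : ℝ) / (m:ℝ)^2 := by
    filter_upwards [eventually_ge_atTop 1] with m hm
    have hm0 : (m:ℝ) ≠ 0 := Nat.cast_ne_zero.2 (by omega)
    rw [choose2_cast m hm]
    field_simp
  have hinv : Tendsto (fun m : ℕ => ((m:ℝ))⁻¹) atTop (nhds 0) :=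
    tendsto_inv_atTop_zero.comp tendsto_natCast_atTop_atTop
  have hsub : Tendsto (fun m : ℕ => 1 - ((m:ℝ))⁻¹) atTop (nhds (1 - 0)) :=
    tendsto_const_nhds.sub hinv
  have base := hsub.div_const 2
  rw [show ((1:ℝ)-0)/2 = 1/2 by norm_num] at base
  exact base.congr' h

lemma stirling_limit (k : ℕ) :
    Tendsto (fun m : ℕ => (stirling1 m (m - k) : ℝ) / (m:ℝ)^(2*k))
      atTop (nhds (1 / (2^k * k.factorial))) := by
  rcases Nat.eq_zero_or_pos k with rfl | hk
  · simp only [Nat.sub_zero, stirling1_self, mul_zero, pow_zero, Nat.cast_one]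
    simpa using tendsto_const_nhds
  obtain ⟨j, rfl⟩ : ∃ j, k = j + 1 := ⟨k - 1, by omega⟩
  set k := j + 1 with hkdef
  have hfacpos : (0:ℝ) < k.factorial := by positivity
  have hhi : Tendsto (fun m : ℕ => (m.choose 2:ℝ)^k / ((m:ℝ)^(2*k) * k.factorial))
      atTop (nhds (1/(2^k * k.factorial))) := by
    have h := (choose2_tendsto.pow k).div_const (k.factorial : ℝ)
    have heq : ∀ m : ℕ, ((m.choose 2:ℝ)/(m:ℝ)^2)^k / (k.factorial:ℝ)
        = (m.choose 2:ℝ)^k / ((m:ℝ)^(2*k) * k.factorial) := by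
      intro m
      rw [div_pow, ← pow_mul, div_div]
    have hval : ((1:ℝ)/2)^k / (k.factorial:ℝ) = 1/(2^k * k.factorial) := by
      rw [div_pow, one_pow, div_div]
    rw [hval] at h
    exact h.congr heq
  have hzero : Tendsto (fun m : ℕ => (Cc k : ℝ) / ((m:ℝ) * k.factorial)) atTop (nhds 0) := by
    apply Tendsto.div_atTop (tendsto_const_nhds : Tendsto _ _ (nhds (Cc k : ℝ)))
    exact Tendsto.atTop_mul_const hfacpos tendsto_natCast_atTop_atTop
  have hlo : Tendsto (fun m : ℕ => (m.choose 2:ℝ)^k / ((m:ℝ)^(2*k) * k.factorial)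
      - (Cc k : ℝ) / ((m:ℝ) * k.factorial)) atTop (nhds (1/(2^k * k.factorial))) := by
    have := hhi.sub hzero
    simpa using this
  refine tendsto_of_tendsto_of_tendsto_of_le_of_le' hlo hhi ?_ ?_
  · -- lower
    filter_upwards [eventually_ge_atTop (max k 1)] with m hm
    have hmk : k ≤ m := le_trans (le_max_left _ _) hm
    have hm1 : 1 ≤ m := le_trans (le_max_right _ _) hm
    have hm0 : (0:ℝ) < (m:ℝ) := by exact_mod_cast hm1
    have hcast : ((m.choose 2:ℝ))^k ≤ (k.factorial:ℝ) * (stirling1 m (m-k) : ℝ)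
        + (Cc k : ℝ) * (m:ℝ)^(2*k-1) := by
      exact_mod_cast stirling_lb m k hmk
    have hexp : 2*k-1 + 1 = 2*k := by omega
    have hsplit : (m:ℝ)^(2*k) = (m:ℝ)^(2*k-1) * (m:ℝ) := by
      rw [← pow_succ, hexp]
    rw [sub_le_iff_le_add, div_le_iff₀ (by positivity), add_mul, div_mul_eq_mul_div,
      div_mul_eq_mul_div]
    calc ((m.choose 2:ℝ))^k
        ≤ (k.factorial:ℝ) * (stirling1 m (m-k) : ℝ) + (Cc k : ℝ) * (m:ℝ)^(2*k-1) := hcast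
      _ = (stirling1 m (m-k) : ℝ) * ((m:ℝ)^(2*k) * k.factorial) / (m:ℝ)^(2*k)
          + (Cc k : ℝ) * ((m:ℝ)^(2*k) * k.factorial) / ((m:ℝ) * k.factorial) := by
          rw [hsplit]
          field_simp
  · -- upper
    filter_upwards [eventually_ge_atTop (max k 1)] with m hm
    have hmk : k ≤ m := le_trans (le_max_left _ _) hm
    have hm1 : 1 ≤ m := le_trans (le_max_right _ _) hm
    have hm0 : (0:ℝ) < (m:ℝ) := by exact_mod_cast hm1
    have hcast : (k.factorial:ℝ) * (stirling1 m (m-k) : ℝ) ≤ ((m.choose 2:ℝ))^k := by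
      exact_mod_cast stirling_ub m k hmk
    rw [div_le_div_iff₀ (by positivity) (by positivity)]
    calc (stirling1 m (m-k) : ℝ) * ((m:ℝ)^(2*k) * k.factorial)
        = ((k.factorial:ℝ) * (stirling1 m (m-k):ℝ)) * (m:ℝ)^(2*k) := by ring
      _ ≤ ((m.choose 2:ℝ))^k * (m:ℝ)^(2*k) :=
          mul_le_mul_of_nonneg_right hcast (by positivity)

/-- `RTCN(n,k) = [n-1, n-1-k] · n!(n-1)!/2^{n-1}`. -/
noncomputable def RTCN (n k : ℕ) : ℝ :=
  (stirling1 (n - 1) (n - 1 - k) : ℝ) *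
    ((n.factorial : ℝ) * ((n - 1).factorial : ℝ) / 2 ^ (n - 1))

/-- `TCN_asym(n,k) = (2n²)^k/k! · (2n-2)!/((n-1)! 2^{n-1})`. -/
noncomputable def TCNasym (n k : ℕ) : ℝ :=
  (2 * (n : ℝ) ^ 2) ^ k / (k.factorial : ℝ) *
    (((2 * n - 2).factorial : ℝ) / (((n - 1).factorial : ℝ) * 2 ^ (n - 1)))

/-- For each fixed `k ≥ 1`,
`(RTCN(n,k)/RTCN(n,k-1)) · (TCN_asym(n,k-1)/TCN_asym(n,k)) → 1/4`. -/
theorem stmt15 (k : ℕ) (hk : 1 ≤ k) :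
    Tendsto (fun n : ℕ =>
        (RTCN n k / RTCN n (k - 1)) * (TCNasym n (k - 1) / TCNasym n k))
      atTop (nhds (1 / 4)) := by
  obtain ⟨j, rfl⟩ : ∃ j, k = j + 1 := ⟨k - 1, by omega⟩
  simp only [Nat.add_sub_cancel]
  have hA := (stirling_limit (j+1)).comp (tendsto_sub_atTop_nat 1)
  have hB := (stirling_limit j).comp (tendsto_sub_atTop_nat 1)
  have hLj : (0:ℝ) < 1/(2^j * j.factorial) := by positivity
  have hBpos := hB.eventually_const_lt hLj
  have hdiv := hA.div hB (ne_of_gt hLj)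
  have hinv : Tendsto (fun m : ℕ => ((m:ℝ))⁻¹) atTop (nhds 0) :=
    tendsto_inv_atTop_zero.comp tendsto_natCast_atTop_atTop
  have hm2 : Tendsto (fun n : ℕ => ((n-1:ℕ):ℝ)^2/(n:ℝ)^2) atTop (nhds 1) := by
    have h1 : Tendsto (fun n : ℕ => (1 - (n:ℝ)⁻¹)^2) atTop (nhds ((1 - 0)^2)) :=
      (tendsto_const_nhds.sub hinv).pow 2
    rw [show ((1:ℝ)-0)^2 = 1 by norm_num] at h1
    refine h1.congr' ?_
    filter_upwards [eventually_ge_atTop 1] with n hn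
    have hn0 : (n:ℝ) ≠ 0 := Nat.cast_ne_zero.2 (by omega)
    have : ((n-1:ℕ):ℝ) = (n:ℝ) - 1 := by
      push_cast [Nat.cast_sub hn]; ring
    rw [this]
    field_simp
  have hconst : Tendsto (fun n : ℕ => ((j:ℝ)+1) * (((n-1:ℕ):ℝ)^2/(n:ℝ)^2) / 2)
      atTop (nhds (((j:ℝ)+1) * 1 / 2)) := (tendsto_const_nhds.mul hm2).div_const 2
  have hG := hdiv.mul hconst
  have hval : (1/(2^(j+1) * ((j+1).factorial:ℝ))) / (1/(2^j * (j.factorial:ℝ)))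
      * (((j:ℝ)+1)*1/2) = 1/4 := by
    have hf : ((j+1).factorial : ℝ) = ((j:ℝ)+1) * (j.factorial:ℝ) := by
      push_cast [Nat.factorial_succ]; ring
    have hj0 : (j.factorial:ℝ) ≠ 0 := by positivity
    have hj1 : (j:ℝ)+1 ≠ 0 := by positivity
    rw [hf]
    field_simp
    ring
  rw [hval] at hG
  refine hG.congr' ?_
  filter_upwards [eventually_ge_atTop (j+3), hBpos] with n hn hBn
  simp only [Function.comp_apply, Pi.div_apply] at hBn ⊢
  have hm1 : 1 ≤ n - 1 := by omega
  have hm0 : ((n-1:ℕ):ℝ) ≠ 0 := Nat.cast_ne_zero.2 (by omega)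
  have hn0 : (n:ℝ) ≠ 0 := Nat.cast_ne_zero.2 (by omega)
  have hm2j : ((n-1:ℕ):ℝ)^(2*j) ≠ 0 := pow_ne_zero _ hm0
  have hB0 : (stirling1 (n-1) (n-1-j) : ℝ) ≠ 0 := by
    have hpow : (0:ℝ) < ((n-1:ℕ):ℝ)^(2*j) := by
      have : (0:ℝ) < ((n-1:ℕ):ℝ) := by
        exact_mod_cast Nat.pos_of_ne_zero (by omega)
      positivity
    have := mul_pos hBn hpow
    rw [div_mul_cancel₀ _ (ne_of_gt hpow)] at this
    exact ne_of_gt this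
  have hfn : (n.factorial:ℝ) ≠ 0 := by positivity
  have hfm : ((n-1).factorial:ℝ) ≠ 0 := by positivity
  have h2p : ((2:ℝ))^(n-1) ≠ 0 := by positivity
  have hf2n : ((2*n-2).factorial:ℝ) ≠ 0 := by positivity
  have hfj : (j.factorial:ℝ) ≠ 0 := by positivity
  have hfj1 : (((j+1).factorial:ℕ):ℝ) ≠ 0 := by positivity
  have hpw : (2*(n:ℝ)^2)^j ≠ 0 := by positivity
  have hsq : ((n-1:ℕ):ℝ)^(2*(j+1)) = ((n-1:ℕ):ℝ)^(2*j) * ((n-1:ℕ):ℝ)^2 := by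
    rw [show 2*(j+1) = 2*j+2 from by ring, pow_add]
  have hps : (2*(n:ℝ)^2)^(j+1) = (2*(n:ℝ)^2)^j * (2*(n:ℝ)^2) := pow_succ _ _
  have hfsucc : (((j+1).factorial:ℕ):ℝ) = ((j:ℝ)+1) * (j.factorial:ℝ) := by
    push_cast [Nat.factorial_succ]; ring
  rw [RTCN, RTCN, TCNasym, TCNasym, hsq, hps, hfsucc]
  field_simp
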